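/- Let 1 ≤ p < ∞ and let (h̃_j)_{j≥1} be a faithful Haar system, and let G denote the closed linear span of {h̃_j : j ≥ 1} in L^p([0,1)). Then there exists a bounded linear projection P : L^p([0,1)) → L^p([0,1)) with range G and ‖P‖ = 1, given for every f ∈ L^p([0,1)) by the norm-convergent series P(f) = Σ_{j=1}^∞ λ(I_j)^{−1}·(∫₀¹ f(t)·h̃_j(t) dt)·h̃_j (with λ(I_1) := 1). In particular G is a complemented subspace of L^p([0,1)). -/

import Mathlib

open MeasureTheory Set Function Filter
open scoped ENNReal

noncomputable section

/-- Lebesgue measure on `ℝ` restricted to the interval `[0,1)`. -/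
def mu01 : Measure ℝ := volume.restrict (Set.Ico (0:ℝ) 1)

/-- The dyadic interval `[i/2^m, (i+1)/2^m)` (of length `2^{-m}`, an element of `D_m`;
here `0 ≤ i < 2^m` is the 0-based index). -/
def dyadicI (m i : ℕ) : Set ℝ := Set.Ico ((i : ℝ)/2^m) ((i+1 : ℝ)/2^m)

/-- The Haar function `h_I = 1_{I⁺} - 1_{I⁻}` supported on the dyadic interval
`I = [i/2^m, (i+1)/2^m) ∈ D_m`. -/
def haarD (m i : ℕ) : ℝ → ℝ := fun t =>
  (Set.Ico ((2*i : ℝ)/2^(m+1)) ((2*i+1 : ℝ)/2^(m+1))).indicator (fun _ => (1:ℝ)) t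
  - (Set.Ico ((2*i+1 : ℝ)/2^(m+1)) ((2*i+2 : ℝ)/2^(m+1))).indicator (fun _ => (1:ℝ)) t

/-- The Haar system in its natural enumeration: `h_1 = 1_{[0,1)}` and, for `n ≥ 2`,
`h_n = h_{I_n}` where `n = 2^j + i` with `1 ≤ i ≤ 2^j` and `I_n = [(i-1)/2^j, i/2^j)`. -/
def haarN : ℕ → ℝ → ℝ := fun n =>
  if n ≤ 1 then (Set.Ico (0:ℝ) 1).indicator (fun _ => (1:ℝ))
  else haarD (Nat.log 2 (n-1)) (n - 1 - 2^(Nat.log 2 (n-1)))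

/-- `λ(I_n)`, the Lebesgue measure of the dyadic interval supporting `h_n`
(with the convention `λ(I_1) = 1`). -/
def measI : ℕ → ℝ := fun n => if n ≤ 1 then 1 else ((2:ℝ)^(Nat.log 2 (n-1)))⁻¹

open Classical in
/-- The element of `L^p([0,1))` represented by the function `f` (junk value if `f ∉ L^p`). -/
def toLp01 (p : ℝ≥0∞) (f : ℝ → ℝ) : Lp ℝ p mu01 :=
  if h : MemLp f p mu01 then h.toLp f else 0

/-- A faithful Haar system: a sequence `(h̃_j)_{j ≥ 1}` of measurable `{0, 1, -1}`-valued
functions such that `h̃_1 = 1_{[0,1)}`, each `h̃_j` for `j ≥ 2` is a finite linear combination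
of Haar functions, `supp h̃_2 = [0,1)`, `supp h̃_{2k-1} = {h̃_k = 1}` and
`supp h̃_{2k} = {h̃_k = -1}` for `k ≥ 2`. -/
structure FaithfulHaarSystem where
  h : ℕ → ℝ → ℝ
  meas : ∀ j, Measurable (h j)
  vals : ∀ j t, h j t = 0 ∨ h j t = 1 ∨ h j t = -1
  one : h 1 = (Set.Ico (0:ℝ) 1).indicator (fun _ => (1:ℝ))
  mem_span : ∀ j, 2 ≤ j → ∃ (S : Finset (ℕ × ℕ)) (c : ℕ × ℕ → ℝ),
      h j = fun t => ∑ q ∈ S, c q * haarD q.1 q.2 t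
  supp_two : Function.support (h 2) = Set.Ico (0:ℝ) 1
  supp_odd : ∀ k, 2 ≤ k → Function.support (h (2*k-1)) = {t | h k t = 1}
  supp_even : ∀ k, 2 ≤ k → Function.support (h (2*k)) = {t | h k t = -1}

end

noncomputable section Dev
namespace FHS

open MeasureTheory Set Function Filter Finset
open scoped ENNReal

instance : IsProbabilityMeasure mu01 :=
  ⟨by simp [mu01, Measure.restrict_apply MeasurableSet.univ, Real.volume_Ico]⟩

lemma mu01_apply {A : Set ℝ} (hA : MeasurableSet A) : mu01 A = volume (A ∩ Set.Ico 0 1) :=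
  Measure.restrict_apply hA

lemma mu01_restrict : mu01.restrict (Set.Ico (0:ℝ) 1) = mu01 := by
  rw [mu01, Measure.restrict_restrict measurableSet_Ico, Set.inter_self]

variable (H : FaithfulHaarSystem)

/-- Support of the `j`-th function. -/
def S (j : ℕ) : Set ℝ := Function.support (H.h j)

lemma measS (j : ℕ) : MeasurableSet (S H j) := by
  have : S H j = (H.h j) ⁻¹' ({0}ᶜ) := by
    ext t; simp [S, Function.mem_support]
  rw [this]
  exact (H.meas j) (measurableSet_singleton 0).compl

lemma S_one : S H 1 = Set.Ico 0 1 := by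
  rw [S, H.one, Set.support_indicator]
  simp [Function.support_const]

lemma S_two : S H 2 = Set.Ico 0 1 := H.supp_two

lemma S_odd {k : ℕ} (hk : 2 ≤ k) : S H (2*k-1) = {t | H.h k t = 1} := H.supp_odd k hk

lemma S_even {k : ℕ} (hk : 2 ≤ k) : S H (2*k) = {t | H.h k t = -1} := H.supp_even k hk

lemma S_split {k : ℕ} (hk : 2 ≤ k) : S H (2*k-1) ∪ S H (2*k) = S H k := by
  rw [S_odd H hk, S_even H hk]
  ext t
  rcases H.vals k t with h | h | h <;> simp [S, Function.mem_support, h]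

lemma S_disj {k : ℕ} (hk : 2 ≤ k) : Disjoint (S H (2*k-1)) (S H (2*k)) := by
  rw [S_odd H hk, S_even H hk, Set.disjoint_left]
  intro t h1 h2
  simp only [Set.mem_setOf_eq] at h1 h2
  rw [h1] at h2; norm_num at h2

lemma S_odd_subset {k : ℕ} (hk : 2 ≤ k) : S H (2*k-1) ⊆ S H k := by
  rw [← S_split H hk]; exact Set.subset_union_left

lemma S_even_subset {k : ℕ} (hk : 2 ≤ k) : S H (2*k) ⊆ S H k := by
  rw [← S_split H hk]; exact Set.subset_union_right

lemma parent (j : ℕ) (hj : 3 ≤ j) : ∃ k, 2 ≤ k ∧ k < j ∧ (j = 2*k-1 ∨ j = 2*k) :=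
  ⟨(j+1)/2, by omega⟩

lemma S_subset : ∀ j, 1 ≤ j → S H j ⊆ Set.Ico 0 1 := by
  intro j
  induction j using Nat.strong_induction_on with
  | _ j ih =>
    intro hj
    match j, hj with
    | 1, _ => rw [S_one]
    | 2, _ => rw [S_two]
    | (m+3), _ =>
      obtain ⟨k, hk2, hkj, hcase⟩ := parent (m+3) (by omega)
      have hsub : S H (m+3) ⊆ S H k := by
        rcases hcase with hc | hc <;> rw [hc]
        · exact S_odd_subset H hk2
        · exact S_even_subset H hk2
      exact hsub.trans (ih k hkj (by omega))

lemma abs_h_le (j : ℕ) (t : ℝ) : |H.h j t| ≤ 1 := by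
  rcases H.vals j t with h | h | h <;> rw [h] <;> norm_num

lemma memLp_h (p : ℝ≥0∞) (j : ℕ) : MemLp (H.h j) p mu01 :=
  MemLp.of_bound (H.meas j).aestronglyMeasurable 1
    (Filter.Eventually.of_forall fun t => by rw [Real.norm_eq_abs]; exact abs_h_le H j t)

lemma integrable_h (j : ℕ) : Integrable (H.h j) mu01 :=
  (memLp_h H 1 j).integrable le_rfl

lemma toLp01_coe (p : ℝ≥0∞) (j : ℕ) : (toLp01 p (H.h j) : ℝ → ℝ) =ᵐ[mu01] H.h j := by
  rw [toLp01, dif_pos (memLp_h H p j)]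
  exact (memLp_h H p j).coeFn_toLp


/-! ### Integrals of Haar functions and measures of supports -/

lemma haarD_integrable (m i : ℕ) : Integrable (haarD m i) volume := by
  unfold haarD
  apply Integrable.sub <;>
  · rw [integrable_indicator_iff measurableSet_Ico]
    exact integrableOn_const measure_Ico_lt_top.ne

lemma haarD_integral (m i : ℕ) : ∫ t, haarD m i t = 0 := by
  unfold haarD
  rw [integral_sub ((integrable_indicator_iff measurableSet_Ico).2
        (integrableOn_const measure_Ico_lt_top.ne))
      ((integrable_indicator_iff measurableSet_Ico).2
        (integrableOn_const measure_Ico_lt_top.ne)),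
    integral_indicator_const (1:ℝ) measurableSet_Ico,
    integral_indicator_const (1:ℝ) measurableSet_Ico,
    Real.volume_real_Ico, Real.volume_real_Ico]
  have h1 : (2*(i:ℝ)+1)/2^(m+1) - (2*i)/2^(m+1) = 1/2^(m+1) := by ring
  have h2 : (2*(i:ℝ)+2)/2^(m+1) - (2*i+1)/2^(m+1) = 1/2^(m+1) := by ring
  rw [h1, h2]
  ring

lemma integrable_h_vol (j : ℕ) (hj : 2 ≤ j) : Integrable (H.h j) volume := by
  obtain ⟨s, c, hrep⟩ := H.mem_span j hj
  rw [hrep]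
  exact integrable_finset_sum s fun q _ => (haarD_integrable q.1 q.2).const_mul (c q)

lemma integral_h_vol (j : ℕ) (hj : 2 ≤ j) : ∫ t, H.h j t = 0 := by
  obtain ⟨s, c, hrep⟩ := H.mem_span j hj
  rw [hrep]
  rw [integral_finset_sum s fun q _ => (haarD_integrable q.1 q.2).const_mul (c q)]
  refine Finset.sum_eq_zero fun q _ => ?_
  rw [integral_const_mul, haarD_integral]
  ring

lemma h_eq_ind (j : ℕ) (hj : 2 ≤ j) (t : ℝ) :
    H.h j t = (S H (2*j-1)).indicator (fun _ => (1:ℝ)) t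
      - (S H (2*j)).indicator (fun _ => (1:ℝ)) t := by
  classical
  have ho : t ∈ S H (2*j-1) ↔ H.h j t = 1 := by rw [S_odd H hj]; exact Iff.rfl
  have he : t ∈ S H (2*j) ↔ H.h j t = -1 := by rw [S_even H hj]; exact Iff.rfl
  rw [Set.indicator_apply, Set.indicator_apply]
  rcases H.vals j t with h | h | h <;> rw [h]
  · rw [if_neg (fun hc => by rw [ho.mp hc] at h; norm_num at h),
      if_neg (fun hc => by rw [he.mp hc] at h; norm_num at h)]
    norm_num
  · rw [if_pos (ho.mpr h), if_neg (fun hc => by rw [he.mp hc] at h; norm_num at h)]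
    norm_num
  · rw [if_neg (fun hc => by rw [ho.mp hc] at h; norm_num at h), if_pos (he.mpr h)]
    norm_num

lemma mu_child_eq (j : ℕ) (hj : 2 ≤ j) : mu01 (S H (2*j-1)) = mu01 (S H (2*j)) := by
  set A := S H (2*j-1)
  set B := S H (2*j)
  have hA : MeasurableSet A := measS H _
  have hB : MeasurableSet B := measS H _
  have hAsub : A ⊆ Set.Ico 0 1 := S_subset H _ (by omega)
  have hBsub : B ⊆ Set.Ico 0 1 := S_subset H _ (by omega)
  have hAfin : volume A < ⊤ :=
    lt_of_le_of_lt (measure_mono hAsub) (by rw [Real.volume_Ico]; norm_num)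
  have hBfin : volume B < ⊤ :=
    lt_of_le_of_lt (measure_mono hBsub) (by rw [Real.volume_Ico]; norm_num)
  have hiA : Integrable (A.indicator (fun _ => (1:ℝ))) volume :=
    (integrable_indicator_iff hA).2 (integrableOn_const hAfin.ne)
  have hiB : Integrable (B.indicator (fun _ => (1:ℝ))) volume :=
    (integrable_indicator_iff hB).2 (integrableOn_const hBfin.ne)
  have h0 : ∫ t, H.h j t = 0 := integral_h_vol H j hj
  have hrepr : (fun t => H.h j t)
      = fun t => A.indicator (fun _ => (1:ℝ)) t - B.indicator (fun _ => (1:ℝ)) t := by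
    funext t; exact h_eq_ind H j hj t
  rw [hrepr] at h0
  rw [integral_sub hiA hiB, integral_indicator_const (1:ℝ) hA,
    integral_indicator_const (1:ℝ) hB] at h0
  have htr : (volume A).toReal = (volume B).toReal := by
    simpa [Measure.real] using sub_eq_zero.mp h0
  have hv : volume A = volume B :=
    (ENNReal.toReal_eq_toReal_iff' hAfin.ne hBfin.ne).mp htr
  rw [mu01_apply hA, mu01_apply hB, Set.inter_eq_self_of_subset_left hAsub,
    Set.inter_eq_self_of_subset_left hBsub, hv]

lemma measI_pos (j : ℕ) : 0 < measI j := by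
  unfold measI
  split <;> positivity

lemma measI_one : measI 1 = 1 := by simp [measI]

lemma measI_two : measI 2 = 1 := by norm_num [measI, Nat.log]

lemma log_two_succ (k : ℕ) (hk : 2 ≤ k) :
    Nat.log 2 (2*k-2) = Nat.log 2 (k-1) + 1 ∧ Nat.log 2 (2*k-1) = Nat.log 2 (k-1) + 1 := by
  set m := Nat.log 2 (k-1) with hm
  have h1 : 2^m ≤ k - 1 := Nat.pow_log_le_self 2 (by omega)
  have h2 : k - 1 < 2^(m+1) := Nat.lt_pow_succ_log_self (by norm_num) (k-1)
  constructor
  · exact Nat.log_eq_of_pow_le_of_lt_pow (by rw [pow_succ]; omega) (by rw [pow_succ, pow_succ]; omega)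
  · exact Nat.log_eq_of_pow_le_of_lt_pow (by rw [pow_succ]; omega) (by rw [pow_succ, pow_succ]; omega)

lemma measI_eq (n : ℕ) (hn : 2 ≤ n) : measI n = ((2:ℝ)^(Nat.log 2 (n-1)))⁻¹ := by
  simp only [measI]; rw [if_neg (by omega)]

lemma measI_child (k : ℕ) (hk : 2 ≤ k) :
    measI (2*k-1) = measI k / 2 ∧ measI (2*k) = measI k / 2 := by
  obtain ⟨hl1, hl2⟩ := log_two_succ k hk
  have e1 : 2*k-1-1 = 2*k-2 := by omega
  constructor
  · rw [measI_eq _ (by omega), measI_eq k hk, e1, hl1, pow_succ, mul_inv, div_eq_mul_inv]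
  · rw [measI_eq _ (by omega), measI_eq k hk, show 2*k-1 = 2*k-1 from rfl, hl2,
      pow_succ, mul_inv, div_eq_mul_inv]

lemma mu_S : ∀ j, 1 ≤ j → mu01 (S H j) = ENNReal.ofReal (measI j) := by
  intro j
  induction j using Nat.strong_induction_on with
  | _ j ih =>
    intro hj
    match j, hj with
    | 1, _ =>
      rw [S_one, measI_one, mu01_apply measurableSet_Ico, Set.inter_self, Real.volume_Ico]
      norm_num
    | 2, _ =>
      rw [S_two, measI_two, mu01_apply measurableSet_Ico, Set.inter_self, Real.volume_Ico]
      norm_num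
    | (m+3), _ =>
      obtain ⟨k, hk2, hkj, hcase⟩ := parent (m+3) (by omega)
      have hIH : mu01 (S H k) = ENNReal.ofReal (measI k) := ih k hkj (by omega)
      have heq : mu01 (S H (2*k-1)) = mu01 (S H (2*k)) := mu_child_eq H k hk2
      have hsum : mu01 (S H (2*k-1)) + mu01 (S H (2*k)) = mu01 (S H k) := by
        rw [← S_split H hk2]
        exact (measure_union (S_disj H hk2) (measS H _)).symm
      have hhalf : mu01 (S H (2*k-1)) = ENNReal.ofReal (measI k / 2) := by
        rw [heq] at hsum
        have h2x : 2 * mu01 (S H (2*k)) = ENNReal.ofReal (measI k) := by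
          rw [two_mul, hsum, hIH]
        rw [heq, ENNReal.ofReal_div_of_pos (by norm_num), ENNReal.ofReal_ofNat]
        exact (ENNReal.eq_div_iff (by norm_num) (by norm_num)).mpr h2x
      obtain ⟨hc1, hc2⟩ := measI_child k hk2
      rcases hcase with hc | hc <;> rw [hc]
      · rw [hhalf, hc1]
      · rw [← heq, hhalf, hc2]


/-! ### Partition structure -/

lemma partition : ∀ n, 1 ≤ n →
    (∀ a b, n+1 ≤ a → a ≤ 2*n → n+1 ≤ b → b ≤ 2*n → a ≠ b → Disjoint (S H a) (S H b)) ∧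
    (∀ t, t ∈ Set.Ico (0:ℝ) 1 → ∃ a, n+1 ≤ a ∧ a ≤ 2*n ∧ t ∈ S H a) := by
  intro n hn
  induction n, hn using Nat.le_induction with
  | base =>
    constructor
    · intro a b ha1 ha2 hb1 hb2 hab; omega
    · intro t ht; exact ⟨2, le_rfl, by omega, by rwa [S_two]⟩
  | succ n hn IH =>
    obtain ⟨IHdisj, IHcov⟩ := IH
    have hsplit : S H (2*n+1) ∪ S H (2*n+2) = S H (n+1) := by
      have := S_split H (k := n+1) (by omega)
      rw [show 2*(n+1)-1 = 2*n+1 by omega, show 2*(n+1) = 2*n+2 by omega] at this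
      exact this
    have hdisj' : Disjoint (S H (2*n+1)) (S H (2*n+2)) := by
      have := S_disj H (k := n+1) (by omega)
      rwa [show 2*(n+1)-1 = 2*n+1 by omega, show 2*(n+1) = 2*n+2 by omega] at this
    have hsub1 : S H (2*n+1) ⊆ S H (n+1) := hsplit ▸ Set.subset_union_left
    have hsub2 : S H (2*n+2) ⊆ S H (n+1) := hsplit ▸ Set.subset_union_right
    have hnew : ∀ c, 2*n+1 ≤ c → c ≤ 2*n+2 → S H c ⊆ S H (n+1) := by
      intro c hc1 hc2
      have : c = 2*n+1 ∨ c = 2*n+2 := by omega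
      rcases this with rfl | rfl
      · exact hsub1
      · exact hsub2
    constructor
    · intro a b ha1 ha2 hb1 hb2 hab
      by_cases hao : a ≤ 2*n <;> by_cases hbo : b ≤ 2*n
      · exact IHdisj a b (by omega) hao (by omega) hbo hab
      · exact (IHdisj a (n+1) (by omega) hao (by omega) (by omega) (by omega)).mono_right
          (hnew b (by omega) (by omega))
      · exact ((IHdisj b (n+1) (by omega) hbo (by omega) (by omega) (by omega)).mono_right
          (hnew a (by omega) (by omega))).symm
      · -- both are new children 2n+1, 2n+2, distinct
        have : (a = 2*n+1 ∧ b = 2*n+2) ∨ (a = 2*n+2 ∧ b = 2*n+1) := by omega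
        rcases this with ⟨rfl, rfl⟩ | ⟨rfl, rfl⟩
        · exact hdisj'
        · exact hdisj'.symm
    · intro t ht
      obtain ⟨a, ha1, ha2, hta⟩ := IHcov t ht
      by_cases ha : a = n+1
      · subst ha
        rw [← hsplit] at hta
        rcases hta with hta | hta
        · exact ⟨2*n+1, by omega, by omega, hta⟩
        · exact ⟨2*n+2, by omega, by omega, hta⟩
      · exact ⟨a, by omega, by omega, hta⟩

lemma const_on_atoms : ∀ n, 1 ≤ n → ∀ i, 1 ≤ i → i ≤ n → ∀ a, n+1 ≤ a → a ≤ 2*n →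
    ∀ t₁ t₂, t₁ ∈ S H a → t₂ ∈ S H a → H.h i t₁ = H.h i t₂ := by
  intro n hn
  induction n, hn using Nat.le_induction with
  | base =>
    intro i hi1 hi2 a ha1 ha2 t₁ t₂ ht₁ ht₂
    have hi : i = 1 := by omega
    have ha : a = 2 := by omega
    subst hi; subst ha
    rw [S_two] at ht₁ ht₂
    rw [H.one, Set.indicator_of_mem ht₁, Set.indicator_of_mem ht₂]
  | succ n hn IH =>
    intro i hi1 hi2 a ha1 ha2 t₁ t₂ ht₁ ht₂
    have hsplit : S H (2*n+1) ∪ S H (2*n+2) = S H (n+1) := by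
      have := S_split H (k := n+1) (by omega)
      rw [show 2*(n+1)-1 = 2*n+1 by omega, show 2*(n+1) = 2*n+2 by omega] at this
      exact this
    by_cases hao : a ≤ 2*n
    · by_cases hio : i ≤ n
      · exact IH i hi1 hio a (by omega) hao t₁ t₂ ht₁ ht₂
      · -- i = n+1 ; S (n+1) disjoint from S a
        have hi : i = n+1 := by omega
        subst hi
        have hd : Disjoint (S H (n+1)) (S H a) :=
          (partition H n hn).1 (n+1) a (by omega) (by omega) (by omega) hao (by omega)
        have h1 : t₁ ∉ S H (n+1) := fun hc => (Set.disjoint_left.mp hd hc) ht₁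
        have h2 : t₂ ∉ S H (n+1) := fun hc => (Set.disjoint_left.mp hd hc) ht₂
        rw [Function.notMem_support.mp h1, Function.notMem_support.mp h2]
    · -- a ∈ {2n+1, 2n+2}
      by_cases hio : i ≤ n
      · have hsub : S H a ⊆ S H (n+1) := by
          have : a = 2*n+1 ∨ a = 2*n+2 := by omega
          rcases this with rfl | rfl
          · exact hsplit ▸ Set.subset_union_left
          · exact hsplit ▸ Set.subset_union_right
        exact IH i hi1 hio (n+1) (by omega) (by omega) t₁ t₂ (hsub ht₁) (hsub ht₂)
      · have hi : i = n+1 := by omega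
        subst hi
        have : a = 2*n+1 ∨ a = 2*n+2 := by omega
        rcases this with rfl | rfl
        · have hSo : S H (2*n+1) = {t | H.h (n+1) t = 1} := by
            have := S_odd H (k := n+1) (by omega)
            rwa [show 2*(n+1)-1 = 2*n+1 by omega] at this
          rw [hSo] at ht₁ ht₂
          rw [Set.mem_setOf_eq] at ht₁ ht₂
          rw [ht₁, ht₂]
        · have hSe : S H (2*n+2) = {t | H.h (n+1) t = -1} := by
            have := S_even H (k := n+1) (by omega)
            rwa [show 2*(n+1) = 2*n+2 by omega] at this
          rw [hSe] at ht₁ ht₂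
          rw [Set.mem_setOf_eq] at ht₁ ht₂
          rw [ht₁, ht₂]

/-! ### Orthogonality -/

lemma integrable_ind (A : Set ℝ) (hA : MeasurableSet A) (c : ℝ) :
    Integrable (A.indicator (fun _ => c)) mu01 :=
  (integrable_indicator_iff hA).2 (integrableOn_const (measure_lt_top _ _).ne)

lemma integral_h_mu01 (j : ℕ) (hj : 2 ≤ j) : ∫ t, H.h j t ∂mu01 = 0 := by
  have hrepr : (fun t => H.h j t)
      = fun t => (S H (2*j-1)).indicator (fun _ => (1:ℝ)) t
          - (S H (2*j)).indicator (fun _ => (1:ℝ)) t := by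
    funext t; exact h_eq_ind H j hj t
  rw [hrepr, integral_sub (integrable_ind _ (measS H _) 1) (integrable_ind _ (measS H _) 1),
    integral_indicator_const (1:ℝ) (measS H _), integral_indicator_const (1:ℝ) (measS H _),
    measureReal_def, measureReal_def, mu_child_eq H j hj]
  ring

lemma orth_lt (i j : ℕ) (hi : 1 ≤ i) (hij : i < j) :
    ∫ t, H.h i t * H.h j t ∂mu01 = 0 := by
  have hj2 : 2 ≤ j := by omega
  by_cases hS : S H j = ∅
  · have hz : ∀ t, H.h j t = 0 := fun t =>
      Function.notMem_support.mp (by rw [show Function.support (H.h j) = S H j from rfl, hS]; exact Set.notMem_empty t)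
    simp [hz]
  · obtain ⟨t₀, ht₀⟩ := Set.nonempty_iff_ne_empty.mpr hS
    have hconst : ∀ t, t ∈ S H j → H.h i t = H.h i t₀ := by
      intro t ht
      exact const_on_atoms H (j-1) (by omega) i hi (by omega) j (by omega) (by omega) t t₀ ht ht₀
    have hfun : ∀ t, H.h i t * H.h j t = H.h i t₀ * H.h j t := by
      intro t
      by_cases ht : t ∈ S H j
      · rw [hconst t ht]
      · rw [Function.notMem_support.mp ht]; ring
    calc ∫ t, H.h i t * H.h j t ∂mu01 = ∫ t, H.h i t₀ * H.h j t ∂mu01 := by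
          exact integral_congr_ae (Filter.Eventually.of_forall hfun)
      _ = H.h i t₀ * ∫ t, H.h j t ∂mu01 := integral_const_mul _ _
      _ = 0 := by rw [integral_h_mu01 H j hj2]; ring

lemma orth (i j : ℕ) (hi : 1 ≤ i) (hj : 1 ≤ j) (hij : i ≠ j) :
    ∫ t, H.h i t * H.h j t ∂mu01 = 0 := by
  rcases lt_or_gt_of_ne hij with h | h
  · exact orth_lt H i j hi h
  · have := orth_lt H j i hj h
    rw [← this]
    exact integral_congr_ae (Filter.Eventually.of_forall fun t => mul_comm _ _)

lemma norm_sq (i : ℕ) (hi : 1 ≤ i) : ∫ t, H.h i t * H.h i t ∂mu01 = measI i := by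
  have hrepr : (fun t => H.h i t * H.h i t) = (S H i).indicator (fun _ => (1:ℝ)) := by
    funext t
    by_cases ht : t ∈ S H i
    · rcases H.vals i t with h | h | h
      · exact absurd h (Function.mem_support.mp ht)
      · rw [h, Set.indicator_of_mem ht]; norm_num
      · rw [h, Set.indicator_of_mem ht]; norm_num
    · rw [Function.notMem_support.mp ht, Set.indicator_of_notMem ht]; ring
  rw [hrepr, integral_indicator_const (1:ℝ) (measS H _), measureReal_def, mu_S H i hi, smul_eq_mul, mul_one,
    ENNReal.toReal_ofReal (measI_pos i).le]

/-- The integral `∫ f·h_j` with `f == h_i`. -/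
lemma integral_h_mul_h (i j : ℕ) (hi : 1 ≤ i) (hj : 1 ≤ j) :
    ∫ t, H.h j t * H.h i t ∂mu01 = if i = j then measI i else 0 := by
  by_cases hij : i = j
  · subst hij; rw [if_pos rfl]; exact norm_sq H i hi
  · rw [if_neg hij]
    exact orth H j i hj hi (fun hc => hij hc.symm)


/-! ### Atom representation of partial sums -/

/-- Coefficient of `f` against `h_j`. -/
def coeff (f : ℝ → ℝ) (j : ℕ) : ℝ := (measI j)⁻¹ * ∫ t, f t * H.h j t ∂mu01

/-- Average of `f` over the atom `S a`. -/
def avg (f : ℝ → ℝ) (a : ℕ) : ℝ := (measI a)⁻¹ * ∫ t in S H a, f t ∂mu01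

/-- The atom-average representation of the `n`-th partial sum. -/
def atomSum (f : ℝ → ℝ) (n : ℕ) : ℝ → ℝ := fun t =>
  ∑ a ∈ Finset.Icc (n+1) (2*n), avg H f a * (S H a).indicator (fun _ => (1:ℝ)) t

lemma split' (n : ℕ) (hn : 1 ≤ n) : S H (2*n+1) ∪ S H (2*n+2) = S H (n+1) := by
  have := S_split H (k := n+1) (by omega)
  rwa [show 2*(n+1)-1 = 2*n+1 by omega, show 2*(n+1) = 2*n+2 by omega] at this

lemma disj' (n : ℕ) (hn : 1 ≤ n) : Disjoint (S H (2*n+1)) (S H (2*n+2)) := by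
  have := S_disj H (k := n+1) (by omega)
  rwa [show 2*(n+1)-1 = 2*n+1 by omega, show 2*(n+1) = 2*n+2 by omega] at this

lemma h_eq_ind' (n : ℕ) (hn : 1 ≤ n) (t : ℝ) :
    H.h (n+1) t = (S H (2*n+1)).indicator (fun _ => (1:ℝ)) t
      - (S H (2*n+2)).indicator (fun _ => (1:ℝ)) t := by
  have := h_eq_ind H (n+1) (by omega) t
  rwa [show 2*(n+1)-1 = 2*n+1 by omega, show 2*(n+1) = 2*n+2 by omega] at this

lemma mul_h_eq_ind' (f : ℝ → ℝ) (n : ℕ) (hn : 1 ≤ n) (t : ℝ) :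
    f t * H.h (n+1) t = (S H (2*n+1)).indicator f t - (S H (2*n+2)).indicator f t := by
  classical
  rw [h_eq_ind' H n hn t, Set.indicator_apply, Set.indicator_apply,
    Set.indicator_apply, Set.indicator_apply]
  by_cases h1 : t ∈ S H (2*n+1) <;> by_cases h2 : t ∈ S H (2*n+2)
  · exact absurd h2 (Set.disjoint_left.mp (disj' H n hn) h1)
  · rw [if_pos h1, if_pos h1, if_neg h2, if_neg h2]; ring
  · rw [if_neg h1, if_neg h1, if_pos h2, if_pos h2]; ring
  · rw [if_neg h1, if_neg h1, if_neg h2, if_neg h2]; ring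

lemma integral_mul_h' (f : ℝ → ℝ) (hf : Integrable f mu01) (n : ℕ) (hn : 1 ≤ n) :
    ∫ t, f t * H.h (n+1) t ∂mu01
      = (∫ t in S H (2*n+1), f t ∂mu01) - ∫ t in S H (2*n+2), f t ∂mu01 := by
  rw [show (fun t => f t * H.h (n+1) t)
      = fun t => (S H (2*n+1)).indicator f t - (S H (2*n+2)).indicator f t from
    funext fun t => mul_h_eq_ind' H f n hn t]
  rw [integral_sub (hf.indicator (measS H _)) (hf.indicator (measS H _)),
    integral_indicator (measS H _), integral_indicator (measS H _)]

lemma sum_eq (f : ℝ → ℝ) (hf : Integrable f mu01) :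
    ∀ n, 1 ≤ n → ∀ t,
      ∑ j ∈ Finset.Icc 1 n, coeff H f j * H.h j t = atomSum H f n t := by
  intro n hn
  induction n, hn using Nat.le_induction with
  | base =>
    intro t
    have h1 : (fun t => f t * H.h 1 t) = (Set.Ico (0:ℝ) 1).indicator f := by
      funext x
      rw [H.one]
      by_cases hx : x ∈ Set.Ico (0:ℝ) 1
      · rw [Set.indicator_of_mem hx, Set.indicator_of_mem hx]; ring
      · rw [Set.indicator_of_notMem hx, Set.indicator_of_notMem hx]; ring
    simp only [atomSum, show (2:ℕ)*1 = 2 from rfl, Finset.Icc_self, Finset.sum_singleton]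
    rw [coeff, h1, integral_indicator measurableSet_Ico, measI_one, avg, measI_two, H.one, S_two]
  | succ n hn IH =>
    intro t
    classical
    set A := ∫ x in S H (2*n+1), f x ∂mu01 with hA
    set B := ∫ x in S H (2*n+2), f x ∂mu01 with hB
    set m := measI (n+1) with hm
    have hm0 : (0:ℝ) < m := measI_pos (n+1)
    have hcoeff : coeff H f (n+1) = m⁻¹ * (A - B) := by
      rw [coeff, integral_mul_h' H f hf n hn]
    have havg : avg H f (n+1) = m⁻¹ * (A + B) := by
      rw [avg, ← split' H n hn,
        setIntegral_union (disj' H n hn) (measS H _) (hf.integrableOn) (hf.integrableOn)]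
    have hm1 : measI (2*n+1) = m / 2 := by
      have := (measI_child (n+1) (by omega)).1
      rwa [show 2*(n+1)-1 = 2*n+1 by omega] at this
    have hm2 : measI (2*n+2) = m / 2 := by
      have := (measI_child (n+1) (by omega)).2
      rwa [show 2*(n+1) = 2*n+2 by omega] at this
    have havg1 : avg H f (2*n+1) = (m/2)⁻¹ * A := by rw [avg, hm1, ← hA]
    have havg2 : avg H f (2*n+2) = (m/2)⁻¹ * B := by rw [avg, hm2, ← hB]
    -- finset bookkeeping
    have hins1 : Finset.Icc (n+1) (2*n) = insert (n+1) (Finset.Icc (n+2) (2*n)) := by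
      ext x; simp only [Finset.mem_Icc, Finset.mem_insert]; omega
    have hins2 : Finset.Icc (n+2) (2*n+2)
        = insert (2*n+1) (insert (2*n+2) (Finset.Icc (n+2) (2*n))) := by
      ext x; simp only [Finset.mem_Icc, Finset.mem_insert]; omega
    have hnm1 : (n+1) ∉ Finset.Icc (n+2) (2*n) := by simp only [Finset.mem_Icc]; omega
    have hnm2 : (2*n+1) ∉ insert (2*n+2) (Finset.Icc (n+2) (2*n)) := by
      simp only [Finset.mem_insert, Finset.mem_Icc]; omega
    have hnm3 : (2*n+2) ∉ Finset.Icc (n+2) (2*n) := by simp only [Finset.mem_Icc]; omega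
    have hLHS : ∑ j ∈ Finset.Icc 1 (n+1), coeff H f j * H.h j t
        = atomSum H f n t + coeff H f (n+1) * H.h (n+1) t := by
      rw [Finset.sum_Icc_succ_top (by omega), IH]
    rw [hLHS]
    have hRHS : atomSum H f (n+1) t
        = avg H f (2*n+1) * (S H (2*n+1)).indicator (fun _ => (1:ℝ)) t
          + avg H f (2*n+2) * (S H (2*n+2)).indicator (fun _ => (1:ℝ)) t
          + ∑ a ∈ Finset.Icc (n+2) (2*n), avg H f a * (S H a).indicator (fun _ => (1:ℝ)) t := by
      rw [atomSum, show 2*(n+1) = 2*n+2 by omega, show n+1+1 = n+2 by omega, hins2,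
        Finset.sum_insert hnm2, Finset.sum_insert hnm3]
      ring
    have hANS : atomSum H f n t
        = avg H f (n+1) * (S H (n+1)).indicator (fun _ => (1:ℝ)) t
          + ∑ a ∈ Finset.Icc (n+2) (2*n), avg H f a * (S H a).indicator (fun _ => (1:ℝ)) t := by
      rw [atomSum, hins1, Finset.sum_insert hnm1]
    rw [hRHS, hANS]
    have key : avg H f (n+1) * (S H (n+1)).indicator (fun _ => (1:ℝ)) t
        + coeff H f (n+1) * H.h (n+1) t
        = avg H f (2*n+1) * (S H (2*n+1)).indicator (fun _ => (1:ℝ)) t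
          + avg H f (2*n+2) * (S H (2*n+2)).indicator (fun _ => (1:ℝ)) t := by
      rw [hcoeff, havg, havg1, havg2, h_eq_ind' H n hn t]
      by_cases h1 : t ∈ S H (2*n+1) <;> by_cases h2 : t ∈ S H (2*n+2)
      · exact absurd h2 (Set.disjoint_left.mp (disj' H n hn) h1)
      · have hu : t ∈ S H (n+1) := (split' H n hn) ▸ Set.mem_union_left _ h1
        rw [Set.indicator_of_mem h1, Set.indicator_of_notMem h2, Set.indicator_of_mem hu]
        field_simp
        ring
      · have hu : t ∈ S H (n+1) := (split' H n hn) ▸ Set.mem_union_right _ h2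
        rw [Set.indicator_of_notMem h1, Set.indicator_of_mem h2, Set.indicator_of_mem hu]
        field_simp
        ring
      · have hu : t ∉ S H (n+1) := by
          rw [← split' H n hn]; exact fun hc => hc.elim h1 h2
        rw [Set.indicator_of_notMem h1, Set.indicator_of_notMem h2,
          Set.indicator_of_notMem hu]
        ring
    linarith [key]

/-! ### Collapse and bounds -/

lemma collapse (n : ℕ) (hn : 1 ≤ n) (e : ℕ → ℝ) (t : ℝ) (a₀ : ℕ)
    (ha₁ : n+1 ≤ a₀) (ha₂ : a₀ ≤ 2*n) (ht : t ∈ S H a₀) :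
    ∑ a ∈ Finset.Icc (n+1) (2*n), e a * (S H a).indicator (fun _ => (1:ℝ)) t = e a₀ := by
  rw [Finset.sum_eq_single a₀]
  · rw [Set.indicator_of_mem ht]; ring
  · intro b hb hba
    rw [Finset.mem_Icc] at hb
    have hd := (partition H n hn).1 b a₀ hb.1 hb.2 ha₁ ha₂ hba
    rw [Set.indicator_of_notMem (fun hc => (Set.disjoint_left.mp hd hc) ht)]
    ring
  · intro hn0
    exact absurd (Finset.mem_Icc.mpr ⟨ha₁, ha₂⟩) hn0

lemma collapse_zero (n : ℕ) (e : ℕ → ℝ) (t : ℝ)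
    (ht : ∀ a, n+1 ≤ a → a ≤ 2*n → t ∉ S H a) :
    ∑ a ∈ Finset.Icc (n+1) (2*n), e a * (S H a).indicator (fun _ => (1:ℝ)) t = 0 := by
  refine Finset.sum_eq_zero fun a ha => ?_
  rw [Finset.mem_Icc] at ha
  rw [Set.indicator_of_notMem (ht a ha.1 ha.2)]
  ring

lemma avg_bound (f : ℝ → ℝ) (C : ℝ)
    (hfC : ∀ᵐ t ∂mu01, |f t| ≤ C) (a : ℕ) (ha : 1 ≤ a) :
    |avg H f a| ≤ C := by
  have hb : ‖∫ t in S H a, f t ∂mu01‖ ≤ C * ((mu01.restrict (S H a)) Set.univ).toReal :=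
    norm_integral_le_of_norm_le_const
      (ae_restrict_of_ae (hfC.mono fun t h => by rwa [Real.norm_eq_abs]))
  rw [Measure.restrict_apply_univ, mu_S H a ha, ENNReal.toReal_ofReal (measI_pos a).le] at hb
  rw [Real.norm_eq_abs] at hb
  have hm0 : (0:ℝ) < measI a := measI_pos a
  rw [avg, abs_mul, abs_inv, abs_of_pos hm0]
  calc (measI a)⁻¹ * |∫ t in S H a, f t ∂mu01| ≤ (measI a)⁻¹ * (C * measI a) := by
        apply mul_le_mul_of_nonneg_left hb (by positivity)
    _ = C := by field_simp

lemma atomSum_bound (f : ℝ → ℝ) (C : ℝ) (hC : 0 ≤ C)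
    (hfC : ∀ᵐ t ∂mu01, |f t| ≤ C) (n : ℕ) (hn : 1 ≤ n) (t : ℝ) :
    |atomSum H f n t| ≤ C := by
  by_cases ht : t ∈ Set.Ico (0:ℝ) 1
  · obtain ⟨a₀, h1, h2, h3⟩ := (partition H n hn).2 t ht
    rw [atomSum, collapse H n hn _ t a₀ h1 h2 h3]
    exact avg_bound H f C hfC a₀ (by omega)
  · rw [atomSum, collapse_zero H n _ t
      (fun a ha1 ha2 hc => ht (S_subset H a (by omega) hc))]
    rwa [abs_zero]

/-! ### The Lᵖ contraction -/

lemma union_atoms (n : ℕ) (hn : 1 ≤ n) :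
    ⋃ a ∈ Finset.Icc (n+1) (2*n), S H a = Set.Ico (0:ℝ) 1 := by
  apply Set.Subset.antisymm
  · refine Set.iUnion₂_subset fun a ha => ?_
    rw [Finset.mem_Icc] at ha
    exact S_subset H a (by omega)
  · intro t ht
    obtain ⟨a₀, h1, h2, h3⟩ := (partition H n hn).2 t ht
    exact Set.mem_biUnion (Finset.mem_Icc.mpr ⟨h1, h2⟩) h3

lemma pairwise_disjoint_atoms (n : ℕ) (hn : 1 ≤ n) :
    (↑(Finset.Icc (n+1) (2*n)) : Set ℕ).PairwiseDisjoint (S H) := by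
  intro a ha b hb hab
  rw [Finset.coe_Icc, Set.mem_Icc] at ha hb
  exact (partition H n hn).1 a b ha.1 ha.2 hb.1 hb.2 hab

lemma lintegral_eq_sum_atoms (n : ℕ) (hn : 1 ≤ n) (G : ℝ → ℝ≥0∞) :
    ∫⁻ t, G t ∂mu01 = ∑ a ∈ Finset.Icc (n+1) (2*n), ∫⁻ t in S H a, G t ∂mu01 := by
  conv_lhs => rw [← mu01_restrict]
  rw [show Set.Ico (0:ℝ) 1 = ⋃ a ∈ Finset.Icc (n+1) (2*n), S H a from
      (union_atoms H n hn).symm]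
  exact lintegral_biUnion_finset (pairwise_disjoint_atoms H n hn)
    (fun a _ => measS H a) G

lemma holder_atom (q : ℝ) (hq1 : 1 ≤ q) (f : ℝ → ℝ) (hf : Integrable f mu01)
    (a : ℕ) (ha : 1 ≤ a) :
    (‖avg H f a‖₊ : ℝ≥0∞) ^ q * mu01 (S H a) ≤ ∫⁻ t in S H a, (‖f t‖₊ : ℝ≥0∞) ^ q ∂mu01 := by
  have hq0 : (0:ℝ) < q := by linarith
  set μa := mu01 (S H a) with hμa
  have hμa_eq : μa = ENNReal.ofReal (measI a) := mu_S H a ha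
  have hμ0 : μa ≠ 0 := by
    rw [hμa_eq]; simp only [ne_eq, ENNReal.ofReal_eq_zero, not_le]; exact measI_pos a
  have hμtop : μa ≠ ⊤ := (measure_lt_top mu01 _).ne
  set I := ∫⁻ t in S H a, (‖f t‖₊ : ℝ≥0∞) ∂mu01 with hI
  set J := ∫⁻ t in S H a, (‖f t‖₊ : ℝ≥0∞) ^ q ∂mu01 with hJ
  have havgle : (‖avg H f a‖₊ : ℝ≥0∞) ≤ μa⁻¹ * I := by
    rw [← enorm_eq_nnnorm, ← ofReal_norm]
    have h1 : ‖avg H f a‖ ≤ (measI a)⁻¹ * ∫ t in S H a, ‖f t‖ ∂mu01 := by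
      rw [avg, Real.norm_eq_abs, abs_mul, abs_inv, abs_of_pos (measI_pos a)]
      exact mul_le_mul_of_nonneg_left
        ((Real.norm_eq_abs _ ▸ norm_integral_le_integral_norm f))
        (inv_nonneg.mpr (measI_pos a).le)
    calc ENNReal.ofReal ‖avg H f a‖
        ≤ ENNReal.ofReal ((measI a)⁻¹ * ∫ t in S H a, ‖f t‖ ∂mu01) := ENNReal.ofReal_le_ofReal h1
      _ = (ENNReal.ofReal (measI a))⁻¹ * ENNReal.ofReal (∫ t in S H a, ‖f t‖ ∂mu01) := by
          rw [ENNReal.ofReal_mul (inv_nonneg.mpr (measI_pos a).le), ENNReal.ofReal_inv_of_pos (measI_pos a)]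
      _ = μa⁻¹ * I := by
          rw [hμa_eq]
          exact congrArg _ (ofReal_integral_norm_eq_lintegral_enorm (hf.restrict (s := S H a)))
  rcases eq_or_lt_of_le hq1 with hq | hq
  · -- q = 1
    rw [← hq, ENNReal.rpow_one]
    have : (‖avg H f a‖₊ : ℝ≥0∞) * μa ≤ (μa⁻¹ * I) * μa := mul_le_mul_left havgle _
    calc (‖avg H f a‖₊ : ℝ≥0∞) * μa ≤ (μa⁻¹ * I) * μa := this
      _ = I * (μa⁻¹ * μa) := by ring
      _ = I := by rw [ENNReal.inv_mul_cancel hμ0 hμtop, mul_one]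
      _ = ∫⁻ t in S H a, (‖f t‖₊ : ℝ≥0∞) ^ (1:ℝ) ∂mu01 := by
          rw [hI]; congr 1; funext t; rw [ENNReal.rpow_one]
      _ = ∫⁻ t in S H a, (‖f t‖₊ : ℝ≥0∞) ^ q ∂mu01 := by rw [← hq]
  · -- 1 < q
    have hqne : q ≠ 0 := hq0.ne'
    set q' := q.conjExponent with hq'
    have hconj : q.HolderConjugate q' := Real.HolderConjugate.conjExponent hq
    have hHolder : I ≤ J ^ (1/q) * μa ^ (1/q') := by
      have h2 := ENNReal.lintegral_mul_le_Lp_mul_Lq (mu01.restrict (S H a)) hconj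
        (g := fun _ => (1:ℝ≥0∞))
        ((hf.restrict (s := S H a)).aestronglyMeasurable.aemeasurable.enorm) aemeasurable_const
      simp only [Pi.mul_apply, mul_one, ENNReal.one_rpow, lintegral_one,
        Measure.restrict_apply_univ] at h2
      exact h2
    have hq'q : (1/q')*q = q - 1 := by
      have hinv : 1/q + 1/q' = 1 := by
        rw [one_div, one_div]; exact hconj.inv_add_inv_eq_one
      have h' : 1/q' = 1 - 1/q := by linarith
      rw [h', sub_mul, one_mul, one_div, inv_mul_cancel₀ hqne]
    have hstep : (μa⁻¹ * (J ^ (1/q) * μa ^ (1/q'))) ^ q * μa = J := by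
      rw [ENNReal.mul_rpow_of_nonneg _ _ hq0.le, ENNReal.mul_rpow_of_nonneg _ _ hq0.le,
        ENNReal.inv_rpow, ← ENNReal.rpow_mul J, ← ENNReal.rpow_mul μa,
        one_div_mul_cancel hqne, ENNReal.rpow_one, hq'q]
      have hmm : μa ^ (q-1) * μa = μa ^ q := by
        have := (ENNReal.rpow_add_of_nonneg (x := μa) (q-1) 1 (by linarith) zero_le_one).symm
        rw [ENNReal.rpow_one] at this
        rw [this, show q - 1 + 1 = q by ring]
      have hμq0 : μa ^ q ≠ 0 :=
        (ENNReal.rpow_pos (pos_iff_ne_zero.mpr hμ0) hμtop).ne'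
      have hμqtop : μa ^ q ≠ ⊤ := ENNReal.rpow_ne_top_of_nonneg hq0.le hμtop
      calc (μa ^ q)⁻¹ * (J * μa ^ (q-1)) * μa = J * ((μa ^ q)⁻¹ * (μa ^ (q-1) * μa)) := by ring
        _ = J * ((μa ^ q)⁻¹ * μa ^ q) := by rw [hmm]
        _ = J := by rw [ENNReal.inv_mul_cancel hμq0 hμqtop, mul_one]
    calc (‖avg H f a‖₊ : ℝ≥0∞) ^ q * μa
        ≤ (μa⁻¹ * I) ^ q * μa := mul_le_mul_left (ENNReal.rpow_le_rpow havgle hq0.le) _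
      _ ≤ (μa⁻¹ * (J ^ (1/q) * μa ^ (1/q'))) ^ q * μa :=
          mul_le_mul_left (ENNReal.rpow_le_rpow (mul_le_mul_right hHolder _) hq0.le) _
      _ = J := hstep

lemma contraction (p : ℝ≥0∞) (hp1 : 1 ≤ p) (hpt : p ≠ ⊤) (f : ℝ → ℝ)
    (hf : Integrable f mu01) (n : ℕ) (hn : 1 ≤ n) :
    eLpNorm (atomSum H f n) p mu01 ≤ eLpNorm f p mu01 := by
  have hp0 : p ≠ 0 := (lt_of_lt_of_le zero_lt_one hp1).ne'
  set q := p.toReal with hq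
  have hq1 : 1 ≤ q := by
    rw [hq, ← ENNReal.toReal_one]
    exact ENNReal.toReal_mono hpt hp1
  have hq0 : (0:ℝ) < q := by linarith
  rw [eLpNorm_eq_lintegral_rpow_enorm_toReal hp0 hpt, eLpNorm_eq_lintegral_rpow_enorm_toReal hp0 hpt]
  simp only [enorm_eq_nnnorm]
  apply ENNReal.rpow_le_rpow _ (by positivity)
  rw [lintegral_eq_sum_atoms H n hn (fun t => (‖atomSum H f n t‖₊ : ℝ≥0∞) ^ p.toReal),
    lintegral_eq_sum_atoms H n hn (fun t => (‖f t‖₊ : ℝ≥0∞) ^ p.toReal)]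
  apply Finset.sum_le_sum
  intro a ha
  rw [Finset.mem_Icc] at ha
  have hconst : ∫⁻ t in S H a, (‖atomSum H f n t‖₊ : ℝ≥0∞) ^ p.toReal ∂mu01
      = (‖avg H f a‖₊ : ℝ≥0∞) ^ p.toReal * mu01 (S H a) := by
    rw [setLIntegral_congr_fun (measS H a) (fun t ht => by
      rw [show atomSum H f n t = avg H f a from collapse H n hn _ t a ha.1 ha.2 ht]),
      setLIntegral_const]
  rw [hconst]
  exact holder_atom H q hq1 f hf a (by omega)


/-! ### Lp-level partial sum operators -/

lemma integrable_mul_h (f : ℝ → ℝ) (hf : Integrable f mu01) (j : ℕ) :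
    Integrable (fun t => f t * H.h j t) mu01 := by
  have heq : (fun t => f t * H.h j t) = fun t => H.h j t * f t :=
    funext fun t => mul_comm _ _
  rw [heq]
  exact hf.bdd_mul (c := 1) (H.meas j).aestronglyMeasurable
    (Filter.Eventually.of_forall fun t => by rw [Real.norm_eq_abs]; exact abs_h_le H j t)

lemma coeff_congr (f g : ℝ → ℝ) (hfg : f =ᵐ[mu01] g) (j : ℕ) :
    coeff H f j = coeff H g j := by
  rw [coeff, coeff]
  congr 1
  exact integral_congr_ae (hfg.mono fun t ht => by dsimp only; rw [ht])

lemma orthN (i j : ℕ) (hi : 1 ≤ i) (hj : 1 ≤ j) :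
    ∫ t, H.h i t * H.h j t ∂mu01 = if i = j then measI i else 0 := by
  by_cases hij : i = j
  · subst hij; rw [if_pos rfl]; exact norm_sq H i hi
  · rw [if_neg hij]; exact orth H i j hi hj hij

lemma coeff_h (i j : ℕ) (hi : 1 ≤ i) (hj : 1 ≤ j) :
    coeff H (H.h j) i = if i = j then 1 else 0 := by
  rw [coeff]
  have : ∫ t, H.h j t * H.h i t ∂mu01 = if i = j then measI i else 0 := by
    rw [← orthN H i j hi hj]
    exact integral_congr_ae (Filter.Eventually.of_forall fun t => mul_comm _ _)
  rw [this]
  by_cases hij : i = j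
  · rw [if_pos hij, if_pos hij, inv_mul_cancel₀ (measI_pos i).ne']
  · rw [if_neg hij, if_neg hij, mul_zero]

lemma integrable_comb (s : Finset ℕ) (e : ℕ → ℝ) :
    Integrable (fun t => ∑ j ∈ s, e j * H.h j t) mu01 :=
  integrable_finset_sum _ fun j _ => (integrable_h H j).const_mul _

lemma integrable_mul_comb (f : ℝ → ℝ) (hf : Integrable f mu01) (s : Finset ℕ) (e : ℕ → ℝ) :
    Integrable (fun t => f t * ∑ j ∈ s, e j * H.h j t) mu01 := by
  have heq : (fun t => f t * ∑ j ∈ s, e j * H.h j t)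
      = fun t => ∑ j ∈ s, e j * (f t * H.h j t) := by
    funext t
    rw [Finset.mul_sum]
    exact Finset.sum_congr rfl fun j _ => by ring
  rw [heq]
  exact integrable_finset_sum _ fun j _ => (integrable_mul_h H f hf j).const_mul _

lemma expansion (s : Finset ℕ) (hs : ∀ j ∈ s, 1 ≤ j) (e : ℕ → ℝ) :
    ∫ t, (∑ j ∈ s, e j * H.h j t)^2 ∂mu01 = ∑ j ∈ s, (e j)^2 * measI j := by
  have h1 : (fun t => (∑ j ∈ s, e j * H.h j t)^2)
      = fun t => ∑ i ∈ s, ∑ j ∈ s, (e i * e j) * (H.h i t * H.h j t) := by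
    funext t
    rw [sq, Finset.sum_mul_sum]
    exact Finset.sum_congr rfl fun i _ => Finset.sum_congr rfl fun j _ => by ring
  have hint : ∀ i j : ℕ, Integrable (fun t => (e i * e j) * (H.h i t * H.h j t)) mu01 :=
    fun i j => ((integrable_mul_h H (H.h i) (integrable_h H i) j).const_mul _)
  rw [h1, integral_finset_sum s (fun i _ => integrable_finset_sum s fun j _ => hint i j)]
  refine Finset.sum_congr rfl fun i hi => ?_
  rw [integral_finset_sum s fun j _ => hint i j]
  rw [Finset.sum_eq_single i]
  · rw [integral_const_mul, orthN H i i (hs i hi) (hs i hi), if_pos rfl]; ring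
  · intro j hj hji
    rw [integral_const_mul, orthN H i j (hs i hi) (hs j hj), if_neg fun hc => hji hc.symm]
    ring
  · intro hni; exact absurd hi hni

lemma bessel (f : ℝ → ℝ) (hf : Integrable f mu01)
    (hf2 : Integrable (fun t => f t^2) mu01) (n : ℕ) :
    ∑ j ∈ Finset.Icc 1 n, (coeff H f j)^2 * measI j ≤ ∫ t, (f t)^2 ∂mu01 := by
  set s := Finset.Icc 1 n with hsdef
  have hs : ∀ j ∈ s, 1 ≤ j := fun j hj => (Finset.mem_Icc.mp hj).1
  set g : ℝ → ℝ := fun t => ∑ j ∈ s, coeff H f j * H.h j t with hg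
  have hgint : Integrable g mu01 := integrable_comb H s _
  have hcm : ∀ j, measI j * coeff H f j = ∫ t, f t * H.h j t ∂mu01 := by
    intro j
    rw [coeff, ← mul_assoc, mul_inv_cancel₀ (measI_pos j).ne', one_mul]
  have hfg : ∫ t, f t * g t ∂mu01 = ∑ j ∈ s, (coeff H f j)^2 * measI j := by
    have h1 : (fun t => f t * g t) = fun t => ∑ j ∈ s, coeff H f j * (f t * H.h j t) := by
      funext t
      rw [hg, Finset.mul_sum]
      exact Finset.sum_congr rfl fun j _ => by ring
    rw [h1, integral_finset_sum _ fun j _ => (integrable_mul_h H f hf j).const_mul _]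
    refine Finset.sum_congr rfl fun j _ => ?_
    rw [integral_const_mul, ← hcm j]
    ring
  have hgg : ∫ t, (g t)^2 ∂mu01 = ∑ j ∈ s, (coeff H f j)^2 * measI j := expansion H s hs _
  have hfgint : Integrable (fun t => f t * g t) mu01 := integrable_mul_comb H f hf s _
  have hggint : Integrable (fun t => (g t)^2) mu01 := by
    have h2 : (fun t => (g t)^2) = fun t => g t * ∑ j ∈ s, coeff H f j * H.h j t := by
      funext t; rw [sq]
    rw [h2]
    exact integrable_mul_comb H g hgint s _
  have hexp : ∫ t, (f t - g t)^2 ∂mu01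
      = (∫ t, (f t)^2 ∂mu01) - ∑ j ∈ s, (coeff H f j)^2 * measI j := by
    have h2 : (fun t => (f t - g t)^2)
        = fun t => ((f t)^2 - 2*(f t * g t)) + (g t)^2 := by
      funext t; ring
    have hint1 : Integrable (fun t => (f t)^2 - 2*(f t * g t)) mu01 :=
      hf2.sub (hfgint.const_mul 2)
    rw [h2, integral_add hint1 hggint,
      integral_sub hf2 (hfgint.const_mul 2), integral_const_mul, hfg, hgg]
    ring
  have h0 : 0 ≤ ∫ t, (f t - g t)^2 ∂mu01 := integral_nonneg fun t => sq_nonneg _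
  rw [hexp] at h0
  linarith

lemma lintegral_sq_comb (s : Finset ℕ) (hs : ∀ j ∈ s, 1 ≤ j) (e : ℕ → ℝ) :
    ∫⁻ t, ((‖∑ j ∈ s, e j * H.h j t‖₊ : ℝ≥0∞)) ^ (2:ℝ) ∂mu01
      = ENNReal.ofReal (∑ j ∈ s, (e j)^2 * measI j) := by
  have hint : Integrable (fun t => (∑ j ∈ s, e j * H.h j t)^2) mu01 := by
    have h2 : (fun t => (∑ j ∈ s, e j * H.h j t)^2)
        = fun t => (∑ j ∈ s, e j * H.h j t) * ∑ j ∈ s, e j * H.h j t := by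
      funext t; rw [sq]
    rw [h2]
    exact integrable_mul_comb H _ (integrable_comb H s e) s e
  rw [← expansion H s hs e,
    ofReal_integral_eq_lintegral_ofReal hint (Filter.Eventually.of_forall fun t => sq_nonneg _)]
  refine lintegral_congr fun t => ?_
  rw [← enorm_eq_nnnorm, ← ofReal_norm, ENNReal.ofReal_rpow_of_nonneg (norm_nonneg _) (by norm_num)]
  congr 1
  rw [Real.norm_eq_abs, show ((2:ℝ)) = ((2:ℕ):ℝ) by norm_num, Real.rpow_natCast, sq_abs]

section LpLevel

variable (p : ℝ≥0∞) [Fact (1 ≤ p)]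

lemma coeFn_comb (s : Finset ℕ) (e : ℕ → ℝ) :
    ((∑ j ∈ s, e j • toLp01 p (H.h j) : Lp ℝ p mu01) : ℝ → ℝ)
      =ᵐ[mu01] fun t => ∑ j ∈ s, e j * H.h j t := by
  classical
  induction s using Finset.induction_on with
  | empty =>
    simp only [Finset.sum_empty]
    exact (Lp.coeFn_zero ℝ p mu01).mono fun t ht => by simp [ht]
  | insert a s' hx ih =>
    rw [Finset.sum_insert hx]
    filter_upwards [Lp.coeFn_add (e a • toLp01 p (H.h a)) (∑ j ∈ s', e j • toLp01 p (H.h j)),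
      Lp.coeFn_smul (e a) (toLp01 p (H.h a)), toLp01_coe H p a, ih] with t h1 h2 h3 h4
    rw [h1, Finset.sum_insert hx]
    simp only [Pi.add_apply]
    rw [h4, h2]
    simp only [Pi.smul_apply, smul_eq_mul, h3]

lemma norm_comb (s : Finset ℕ) (e : ℕ → ℝ) :
    ‖(∑ j ∈ s, e j • toLp01 p (H.h j) : Lp ℝ p mu01)‖
      = (eLpNorm (fun t => ∑ j ∈ s, e j * H.h j t) p mu01).toReal := by
  rw [Lp.norm_def, eLpNorm_congr_ae (coeFn_comb H p s e)]

/-- The `n`-th partial sum operator at the `Lp` level. -/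
def Sel (f : Lp ℝ p mu01) (n : ℕ) : Lp ℝ p mu01 :=
  ∑ j ∈ Finset.Icc 1 n, ((measI j)⁻¹ * ∫ t, f t * H.h j t ∂mu01) • toLp01 p (H.h j)

lemma Sel_eq_coeff_sum (f : Lp ℝ p mu01) (n : ℕ) :
    Sel H p f n = ∑ j ∈ Finset.Icc 1 n, (coeff H (⇑f) j) • toLp01 p (H.h j) := rfl

lemma Lp_integrable (f : Lp ℝ p mu01) : Integrable (⇑f) mu01 :=
  (Lp.memLp f).integrable (Fact.out : 1 ≤ p)

lemma norm_Sel_le (hpt : p ≠ ⊤) (f : Lp ℝ p mu01) (n : ℕ) :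
    ‖Sel H p f n‖ ≤ ‖f‖ := by
  rcases Nat.eq_zero_or_pos n with rfl | hn
  · rw [Sel_eq_coeff_sum, show Finset.Icc 1 0 = (∅ : Finset ℕ) from rfl, Finset.sum_empty,
      norm_zero]
    exact norm_nonneg f
  · rw [Sel_eq_coeff_sum, norm_comb,
      eLpNorm_congr_ae (Filter.Eventually.of_forall (sum_eq H (⇑f) (Lp_integrable p f) n hn)),
      Lp.norm_def]
    exact ENNReal.toReal_mono (Lp.eLpNorm_ne_top f)
      (contraction H p (Fact.out : 1 ≤ p) hpt (⇑f) (Lp_integrable p f) n hn)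

lemma Sel_sub (f g : Lp ℝ p mu01) (n : ℕ) :
    Sel H p (f - g) n = Sel H p f n - Sel H p g n := by
  rw [Sel_eq_coeff_sum, Sel_eq_coeff_sum, Sel_eq_coeff_sum, ← Finset.sum_sub_distrib]
  refine Finset.sum_congr rfl fun j _ => ?_
  rw [← sub_smul]
  congr 1
  have hc : coeff H (⇑(f - g)) j = coeff H (⇑f - ⇑g) j :=
    coeff_congr H _ _ (Lp.coeFn_sub f g) j
  rw [hc, coeff, coeff, coeff]
  have : ∫ t, (⇑f - ⇑g) t * H.h j t ∂mu01
      = (∫ t, f t * H.h j t ∂mu01) - ∫ t, g t * H.h j t ∂mu01 := by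
    rw [← integral_sub (integrable_mul_h H _ (Lp_integrable p f) j)
      (integrable_mul_h H _ (Lp_integrable p g) j)]
    refine integral_congr_ae (Filter.Eventually.of_forall fun t => ?_)
    simp only [Pi.sub_apply]
    ring
  rw [this]
  ring

lemma Sel_add (f g : Lp ℝ p mu01) (n : ℕ) :
    Sel H p (f + g) n = Sel H p f n + Sel H p g n := by
  rw [Sel_eq_coeff_sum, Sel_eq_coeff_sum, Sel_eq_coeff_sum, ← Finset.sum_add_distrib]
  refine Finset.sum_congr rfl fun j _ => ?_
  rw [← add_smul]
  congr 1
  have hc : coeff H (⇑(f + g)) j = coeff H (⇑f + ⇑g) j :=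
    coeff_congr H _ _ (Lp.coeFn_add f g) j
  rw [hc, coeff, coeff, coeff]
  have : ∫ t, (⇑f + ⇑g) t * H.h j t ∂mu01
      = (∫ t, f t * H.h j t ∂mu01) + ∫ t, g t * H.h j t ∂mu01 := by
    rw [← integral_add (integrable_mul_h H _ (Lp_integrable p f) j)
      (integrable_mul_h H _ (Lp_integrable p g) j)]
    refine integral_congr_ae (Filter.Eventually.of_forall fun t => ?_)
    simp only [Pi.add_apply]
    ring
  rw [this]
  ring

lemma Sel_smul (c : ℝ) (f : Lp ℝ p mu01) (n : ℕ) :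
    Sel H p (c • f) n = c • Sel H p f n := by
  rw [Sel_eq_coeff_sum, Sel_eq_coeff_sum, Finset.smul_sum]
  refine Finset.sum_congr rfl fun j _ => ?_
  rw [smul_smul]
  congr 1
  have hc : coeff H (⇑(c • f)) j = coeff H (c • ⇑f) j :=
    coeff_congr H _ _ (Lp.coeFn_smul c f) j
  rw [hc, coeff, coeff]
  have : ∫ t, (c • ⇑f) t * H.h j t ∂mu01 = c * ∫ t, f t * H.h j t ∂mu01 := by
    rw [← integral_const_mul]
    refine integral_congr_ae (Filter.Eventually.of_forall fun t => ?_)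
    simp only [Pi.smul_apply, smul_eq_mul]
    ring
  rw [this]
  ring

lemma Sel_fix (j : ℕ) (hj : 1 ≤ j) (n : ℕ) (hn : j ≤ n) :
    Sel H p (toLp01 p (H.h j)) n = toLp01 p (H.h j) := by
  rw [Sel_eq_coeff_sum]
  have hcoeff : ∀ i, 1 ≤ i → coeff H (⇑(toLp01 p (H.h j))) i = if i = j then 1 else 0 := by
    intro i hi
    rw [coeff_congr H _ _ (toLp01_coe H p j) i]
    exact coeff_h H i j hi hj
  rw [Finset.sum_eq_single j]
  · rw [hcoeff j hj, if_pos rfl, one_smul]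
  · intro i hi hij
    rw [hcoeff i (Finset.mem_Icc.mp hi).1, if_neg hij, zero_smul]
  · intro hnj
    exact absurd (Finset.mem_Icc.mpr ⟨hj, hn⟩) hnj

lemma Sel_diff (f : Lp ℝ p mu01) (N n : ℕ) (hn : N ≤ n) :
    Sel H p f n - Sel H p f N
      = ∑ j ∈ Finset.Ioc N n, (coeff H (⇑f) j) • toLp01 p (H.h j) := by
  rw [Sel_eq_coeff_sum, Sel_eq_coeff_sum, show (1:ℕ) = 0 + 1 from rfl,
    Finset.Icc_add_one_left_eq_Ioc, Finset.Icc_add_one_left_eq_Ioc,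
    ← Finset.sum_Ioc_consecutive _ (Nat.zero_le N) hn]
  rw [add_sub_cancel_left]

lemma diff_fun_eq (f : ℝ → ℝ) (hf : Integrable f mu01) (N n : ℕ)
    (hN : 1 ≤ N) (hn : N ≤ n) (t : ℝ) :
    ∑ j ∈ Finset.Ioc N n, coeff H f j * H.h j t = atomSum H f n t - atomSum H f N t := by
  rw [← sum_eq H f hf n (by omega) t, ← sum_eq H f hf N hN t, show (1:ℕ) = 0 + 1 from rfl,
    Finset.Icc_add_one_left_eq_Ioc, Finset.Icc_add_one_left_eq_Ioc,
    ← Finset.sum_Ioc_consecutive (fun j => coeff H f j * H.h j t) (Nat.zero_le N) hn]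
  rw [add_sub_cancel_left]


lemma norm_diff_formula (f : Lp ℝ p mu01) (N n : ℕ) (hn : N ≤ n) :
    ‖Sel H p f n - Sel H p f N‖
      = (eLpNorm (fun t => ∑ j ∈ Finset.Ioc N n, coeff H (⇑f) j * H.h j t) p mu01).toReal := by
  rw [Sel_diff H p f N n hn, norm_comb]

lemma cauchy_bounded (hpt : p ≠ ⊤) (f : Lp ℝ p mu01) (C : ℝ) (hC : 0 < C)
    (hb : ∀ᵐ t ∂mu01, |f t| ≤ C) :
    CauchySeq (fun n => Sel H p f n) := by
  have hfi : Integrable (⇑f) mu01 := Lp_integrable p f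
  have hf2 : Integrable (fun t => f t * f t) mu01 :=
    (MemLp.of_bound ((Lp.aestronglyMeasurable f).mul (Lp.aestronglyMeasurable f)) (C*C)
      (hb.mono fun t ht => by
        simp only [Pi.mul_apply]
        rw [Real.norm_eq_abs, abs_mul]
        exact mul_le_mul ht ht (abs_nonneg _) hC.le)).integrable le_rfl
  have hf2' : Integrable (fun t => (f t)^2) mu01 := by
    rw [show (fun t => (f t)^2) = fun t => f t * f t from funext fun t => pow_two _]
    exact hf2
  set b : ℕ → ℝ := fun j => (coeff H (⇑f) j)^2 * measI j with hbdef
  have hbnn : ∀ j, 0 ≤ b j := fun j => mul_nonneg (sq_nonneg _) (measI_pos j).le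
  set u : ℕ → ℝ := fun n => ∑ j ∈ Finset.Icc 1 n, b j with hudef
  have hu_mono : Monotone u := fun m n hmn => Finset.sum_le_sum_of_subset_of_nonneg
      (Finset.Icc_subset_Icc_right hmn) (fun j _ _ => hbnn j)
  have hu_bdd : ∀ n, u n ≤ ∫ t, (f t)^2 ∂mu01 := fun n => bessel H _ hfi hf2' n
  have hu_cauchy : CauchySeq u := by
    have hb' : BddAbove (Set.range u) := ⟨∫ t, (f t)^2 ∂mu01, by
      rintro x ⟨n, rfl⟩; exact hu_bdd n⟩
    exact (tendsto_atTop_ciSup hu_mono hb').cauchySeq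
  -- tail bound machinery
  have key : ∀ δ : ℝ, 0 < δ → ∃ N, 1 ≤ N ∧ ∀ n, N ≤ n →
      0 ≤ (∑ j ∈ Finset.Ioc N n, b j) ∧ (∑ j ∈ Finset.Ioc N n, b j) < δ := by
    intro δ hδ
    obtain ⟨N₀, hN₀⟩ := Metric.cauchySeq_iff.mp hu_cauchy δ hδ
    refine ⟨max N₀ 1, le_max_right _ _, fun n hn => ?_⟩
    set N := max N₀ 1
    have hsplit : u n = u N + ∑ j ∈ Finset.Ioc N n, b j := by
      rw [hudef]
      simp only
      rw [show (1:ℕ) = 0 + 1 from rfl, Finset.Icc_add_one_left_eq_Ioc, Finset.Icc_add_one_left_eq_Ioc,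
        ← Finset.sum_Ioc_consecutive b (Nat.zero_le N) hn]
    have hd := hN₀ n (le_trans (le_max_left _ _) hn) N (le_max_left _ _)
    rw [Real.dist_eq] at hd
    constructor
    · exact Finset.sum_nonneg fun j _ => hbnn j
    · have : ∑ j ∈ Finset.Ioc N n, b j = u n - u N := by rw [hsplit]; ring
      rw [this]
      calc u n - u N ≤ |u n - u N| := le_abs_self _
        _ < δ := hd
  rw [Metric.cauchySeq_iff']
  intro ε hε
  by_cases hp2 : p ≤ 2
  · -- p ≤ 2 : compare with the L² norm
    obtain ⟨N, hN1, hNp⟩ := key (ε^2) (by positivity)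
    refine ⟨N, fun n hn => ?_⟩
    obtain ⟨htail0, htail⟩ := hNp n hn
    rw [dist_eq_norm, norm_diff_formula H p f N n hn]
    set D : ℝ → ℝ := fun t => ∑ j ∈ Finset.Ioc N n, coeff H (⇑f) j * H.h j t with hD
    have hD_meas : AEStronglyMeasurable D mu01 := (integrable_comb H _ _).aestronglyMeasurable
    have hDL2 : ∫⁻ t, (‖D t‖₊ : ℝ≥0∞) ^ (2:ℝ) ∂mu01
        = ENNReal.ofReal (∑ j ∈ Finset.Ioc N n, b j) :=
      lintegral_sq_comb H _ (fun j hj => by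
        have := (Finset.mem_Ioc.mp hj).1; omega) _
    have hle2 : eLpNorm D p mu01 ≤ eLpNorm D 2 mu01 :=
      eLpNorm_le_eLpNorm_of_exponent_le hp2 hD_meas
    have hD2 : eLpNorm D 2 mu01
        = ENNReal.ofReal ((∑ j ∈ Finset.Ioc N n, b j) ^ ((1:ℝ)/2)) := by
      rw [eLpNorm_eq_lintegral_rpow_enorm_toReal (by norm_num) (by norm_num)]
      rw [show ((2:ℝ≥0∞)).toReal = (2:ℝ) from by norm_num]
      simp only [enorm_eq_nnnorm]
      rw [hDL2, ENNReal.ofReal_rpow_of_nonneg htail0 (by norm_num)]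
    have hfin : eLpNorm D 2 mu01 ≠ ⊤ := by rw [hD2]; exact ENNReal.ofReal_ne_top
    have hmono : (eLpNorm D p mu01).toReal ≤ (eLpNorm D 2 mu01).toReal :=
      ENNReal.toReal_mono hfin hle2
    have h2 : (eLpNorm D 2 mu01).toReal = (∑ j ∈ Finset.Ioc N n, b j) ^ ((1:ℝ)/2) := by
      rw [hD2, ENNReal.toReal_ofReal (Real.rpow_nonneg htail0 _)]
    have hfinal : (∑ j ∈ Finset.Ioc N n, b j) ^ ((1:ℝ)/2) < ε := by
      have h3 : (∑ j ∈ Finset.Ioc N n, b j) ^ ((1:ℝ)/2) < (ε^2) ^ ((1:ℝ)/2) :=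
        Real.rpow_lt_rpow htail0 htail (by norm_num)
      have h4 : ((ε^2 : ℝ)) ^ ((1:ℝ)/2) = ε := by
        rw [← Real.rpow_natCast ε 2, ← Real.rpow_mul hε.le]
        norm_num
      linarith [h4 ▸ h3]
    calc (eLpNorm D p mu01).toReal ≤ (eLpNorm D 2 mu01).toReal := hmono
      _ = (∑ j ∈ Finset.Ioc N n, b j) ^ ((1:ℝ)/2) := h2
      _ < ε := hfinal
  · -- 2 < p : interpolation with the uniform bound 2C
    have hplt : (2:ℝ≥0∞) < p := not_le.mp hp2
    set q := p.toReal with hq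
    have hq2 : 2 < q := by
      have := (ENNReal.toReal_lt_toReal (by norm_num : (2:ℝ≥0∞) ≠ ⊤) hpt).mpr hplt
      simpa using this
    have hq0 : (0:ℝ) < q := by linarith
    set M := 2*C with hM
    have hM0 : (0:ℝ) < M := by linarith
    have hMq : (0:ℝ) < M ^ (q-2) := Real.rpow_pos_of_pos hM0 _
    obtain ⟨N, hN1, hNp⟩ := key (ε ^ q / M ^ (q-2)) (by positivity)
    refine ⟨N, fun n hn => ?_⟩
    obtain ⟨htail0, htail⟩ := hNp n hn
    rw [dist_eq_norm, norm_diff_formula H p f N n hn]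
    set D : ℝ → ℝ := fun t => ∑ j ∈ Finset.Ioc N n, coeff H (⇑f) j * H.h j t with hD
    have hDL2 : ∫⁻ t, (‖D t‖₊ : ℝ≥0∞) ^ (2:ℝ) ∂mu01
        = ENNReal.ofReal (∑ j ∈ Finset.Ioc N n, b j) :=
      lintegral_sq_comb H _ (fun j hj => by
        have := (Finset.mem_Ioc.mp hj).1; omega) _
    have hDbound : ∀ t, |D t| ≤ M := by
      intro t
      rw [hD]
      simp only
      rw [diff_fun_eq H (⇑f) hfi N n hN1 hn t]
      calc |atomSum H (⇑f) n t - atomSum H (⇑f) N t|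
          ≤ |atomSum H (⇑f) n t| + |atomSum H (⇑f) N t| := abs_sub _ _
        _ ≤ C + C := add_le_add
            (atomSum_bound H _ C hC.le hb n (by omega) t)
            (atomSum_bound H _ C hC.le hb N hN1 t)
        _ = M := by rw [hM]; ring
    have hpoint : ∀ t, (‖D t‖₊ : ℝ≥0∞) ^ q
        ≤ ENNReal.ofReal (M ^ (q-2)) * (‖D t‖₊ : ℝ≥0∞) ^ (2:ℝ) := by
      intro t
      have h1 : (‖D t‖₊ : ℝ≥0∞) ^ q = (‖D t‖₊ : ℝ≥0∞) ^ (q-2) * (‖D t‖₊ : ℝ≥0∞) ^ (2:ℝ) := by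
        rw [← ENNReal.rpow_add_of_nonneg _ _ (by linarith) (by norm_num)]
        congr 1
        ring
      rw [h1]
      apply mul_le_mul_left
      calc (‖D t‖₊ : ℝ≥0∞) ^ (q-2) ≤ (ENNReal.ofReal M) ^ (q-2) := by
            apply ENNReal.rpow_le_rpow _ (by linarith)
            rw [← enorm_eq_nnnorm, ← ofReal_norm]
            exact ENNReal.ofReal_le_ofReal (by rw [Real.norm_eq_abs]; exact hDbound t)
        _ = ENNReal.ofReal (M ^ (q-2)) := ENNReal.ofReal_rpow_of_nonneg hM0.le (by linarith)
    have hlint : ∫⁻ t, (‖D t‖₊ : ℝ≥0∞) ^ q ∂mu01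
        ≤ ENNReal.ofReal (M ^ (q-2) * ∑ j ∈ Finset.Ioc N n, b j) := by
      calc ∫⁻ t, (‖D t‖₊ : ℝ≥0∞) ^ q ∂mu01
          ≤ ∫⁻ t, ENNReal.ofReal (M ^ (q-2)) * (‖D t‖₊ : ℝ≥0∞) ^ (2:ℝ) ∂mu01 :=
            lintegral_mono hpoint
        _ = ENNReal.ofReal (M ^ (q-2)) * ∫⁻ t, (‖D t‖₊ : ℝ≥0∞) ^ (2:ℝ) ∂mu01 :=
            lintegral_const_mul' _ _ ENNReal.ofReal_ne_top
        _ = ENNReal.ofReal (M ^ (q-2) * ∑ j ∈ Finset.Ioc N n, b j) := by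
            rw [hDL2, ← ENNReal.ofReal_mul hMq.le]
    have hp0 : p ≠ 0 := (lt_of_lt_of_le zero_lt_one (Fact.out : 1 ≤ p)).ne'
    have help : eLpNorm D p mu01
        ≤ ENNReal.ofReal ((M ^ (q-2) * ∑ j ∈ Finset.Ioc N n, b j) ^ (1/q)) := by
      rw [eLpNorm_eq_lintegral_rpow_enorm_toReal hp0 hpt]
      calc (∫⁻ t, (‖D t‖₊ : ℝ≥0∞) ^ p.toReal ∂mu01) ^ (1 / p.toReal)
          ≤ (ENNReal.ofReal (M ^ (q-2) * ∑ j ∈ Finset.Ioc N n, b j)) ^ (1/q) :=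
            ENNReal.rpow_le_rpow hlint (by positivity)
        _ = ENNReal.ofReal ((M ^ (q-2) * ∑ j ∈ Finset.Ioc N n, b j) ^ (1/q)) :=
            ENNReal.ofReal_rpow_of_nonneg (by positivity) (by positivity)
    have htoreal : (eLpNorm D p mu01).toReal
        ≤ (M ^ (q-2) * ∑ j ∈ Finset.Ioc N n, b j) ^ (1/q) := by
      have := ENNReal.toReal_mono ENNReal.ofReal_ne_top help
      rwa [ENNReal.toReal_ofReal (by positivity)] at this
    have hfinal : (M ^ (q-2) * ∑ j ∈ Finset.Ioc N n, b j) ^ (1/q) < ε := by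
      have hlt : M ^ (q-2) * (∑ j ∈ Finset.Ioc N n, b j) < ε ^ q := by
        have := mul_lt_mul_of_pos_left htail hMq
        rwa [mul_div_cancel₀ _ hMq.ne'] at this
      have h3 : (M ^ (q-2) * ∑ j ∈ Finset.Ioc N n, b j) ^ (1/q) < (ε ^ q) ^ (1/q) :=
        Real.rpow_lt_rpow (by positivity) hlt (by positivity)
      have h4 : ((ε ^ q : ℝ)) ^ (1/q) = ε := by
        rw [← Real.rpow_mul hε.le, mul_one_div, div_self hq0.ne', Real.rpow_one]
      linarith [h4 ▸ h3]
    linarith [htoreal, hfinal]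

lemma cauchy_all (hpt : p ≠ ⊤) (f : Lp ℝ p mu01) :
    CauchySeq (fun n => Sel H p f n) := by
  rw [Metric.cauchySeq_iff]
  intro ε hε
  obtain ⟨g, hgnorm, hgmem⟩ := (Lp.memLp f).exists_simpleFunc_eLpNorm_sub_lt hpt
      (ε := ENNReal.ofReal (ε/3)) (ENNReal.ofReal_pos.mpr (by linarith)).ne'
  obtain ⟨C₀, hC₀⟩ := g.exists_forall_norm_le
  set C : ℝ := |C₀| + 1 with hCdef
  have hCpos : 0 < C := by positivity
  set g' : Lp ℝ p mu01 := hgmem.toLp ⇑g with hg'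
  have hg'coe : ⇑g' =ᵐ[mu01] ⇑g := hgmem.coeFn_toLp
  have hbound : ∀ᵐ t ∂mu01, |g' t| ≤ C := hg'coe.mono fun t ht => by
    rw [ht, ← Real.norm_eq_abs]
    calc ‖g t‖ ≤ C₀ := hC₀ t
      _ ≤ |C₀| := le_abs_self _
      _ ≤ C := by rw [hCdef]; linarith
  have hdistfg : ‖f - g'‖ < ε/3 := by
    rw [Lp.norm_def]
    have hcongr : eLpNorm (⇑(f - g')) p mu01 = eLpNorm (⇑f - ⇑g) p mu01 := by
      refine eLpNorm_congr_ae ?_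
      filter_upwards [Lp.coeFn_sub f g', hg'coe] with t h1 h2
      rw [h1]
      simp only [Pi.sub_apply]
      rw [h2]
    rw [hcongr]
    have h5 := (ENNReal.toReal_lt_toReal (ne_top_of_lt hgnorm) ENNReal.ofReal_ne_top).mpr hgnorm
    rwa [ENNReal.toReal_ofReal (by linarith)] at h5
  obtain ⟨N, hN⟩ := Metric.cauchySeq_iff.mp
      (cauchy_bounded H p hpt g' C hCpos hbound) (ε/3) (by linarith)
  refine ⟨N, fun m hm n hn => ?_⟩
  have hdiff : ∀ k, dist (Sel H p f k) (Sel H p g' k) ≤ ε/3 := by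
    intro k
    rw [dist_eq_norm, ← Sel_sub H p f g' k]
    calc ‖Sel H p (f - g') k‖ ≤ ‖f - g'‖ := norm_Sel_le H p hpt _ k
      _ ≤ ε/3 := hdistfg.le
  calc dist (Sel H p f m) (Sel H p f n)
      ≤ dist (Sel H p f m) (Sel H p g' m) + dist (Sel H p g' m) (Sel H p g' n)
        + dist (Sel H p g' n) (Sel H p f n) := dist_triangle4 _ _ _ _
    _ < ε/3 + ε/3 + ε/3 := by
        have h1 := hdiff m
        have h2 := hN m hm n hn
        have h3 := hdiff n
        rw [dist_comm (Sel H p f n)] at h3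
        linarith
    _ = ε := by ring

lemma norm_toLp_h_one (hptop : p ≠ ⊤) : ‖toLp01 p (H.h 1)‖ = 1 := by
  classical
  have hp0 : p ≠ 0 := (lt_of_lt_of_le zero_lt_one (Fact.out : 1 ≤ p)).ne'
  rw [toLp01, dif_pos (memLp_h H p 1), Lp.norm_toLp]
  rw [eLpNorm_congr_ae (Filter.Eventually.of_forall (fun t => by rw [H.one]))]
  rw [eLpNorm_indicator_const measurableSet_Ico hp0 hptop]
  have hmu : mu01 (Set.Ico (0:ℝ) 1) = 1 := by
    rw [mu01_apply measurableSet_Ico, Set.inter_self, Real.volume_Ico]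
    norm_num
  rw [hmu, ENNReal.one_rpow, mul_one]
  simp

end LpLevel


end FHS
end Dev

open FHS

/-- Let `1 ≤ p < ∞`, let `(h̃_j)` be a faithful Haar system and let `G` be
the closed linear span of `{h̃_j : j ≥ 1}` in `L^p([0,1))`. Then there is a bounded linear
projection `P : L^p([0,1)) → L^p([0,1))` onto `G` with `‖P‖ = 1`, given by the
norm-convergent series `P f = ∑_{j=1}^∞ λ(I_j)⁻¹ (∫₀¹ f h̃_j dλ) h̃_j`. In particular `G` is
complemented in `L^p([0,1))`. -/
theorem faithful_haar_span_complemented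
    (p : ℝ≥0∞) [Fact (1 ≤ p)] (hptop : p ≠ ∞) (H : FaithfulHaarSystem) :
    ∃ P : Lp ℝ p mu01 →L[ℝ] Lp ℝ p mu01,
      ‖P‖ = 1 ∧
      Set.range P =
        closure ((Submodule.span ℝ
          {x : Lp ℝ p mu01 | ∃ j : ℕ, 1 ≤ j ∧ x = toLp01 p (H.h j)} : Submodule ℝ _) :
            Set (Lp ℝ p mu01)) ∧
      (∀ x ∈ closure ((Submodule.span ℝ
          {x : Lp ℝ p mu01 | ∃ j : ℕ, 1 ≤ j ∧ x = toLp01 p (H.h j)} : Submodule ℝ _) :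
            Set (Lp ℝ p mu01)), P x = x) ∧
      (∀ f : Lp ℝ p mu01,
        Filter.Tendsto
          (fun n => ∑ j ∈ Finset.Icc 1 n,
            ((measI j)⁻¹ * ∫ t, f t * H.h j t ∂mu01) • toLp01 p (H.h j))
          Filter.atTop (nhds (P f))) := by
  classical
  have hconv : ∀ f : Lp ℝ p mu01, ∃ g, Filter.Tendsto (fun n => Sel H p f n)
      Filter.atTop (nhds g) :=
    fun f => cauchySeq_tendsto_of_complete (cauchy_all H p hptop f)
  choose Pfun hP using hconv
  have hadd : ∀ f g, Pfun (f + g) = Pfun f + Pfun g := by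
    intro f g
    refine tendsto_nhds_unique (hP (f+g)) ?_
    have heq : (fun n => Sel H p (f+g) n) = fun n => Sel H p f n + Sel H p g n :=
      funext fun n => Sel_add H p f g n
    rw [heq]
    exact (hP f).add (hP g)
  have hsmul : ∀ (c : ℝ) (f : Lp ℝ p mu01), Pfun (c • f) = c • Pfun f := by
    intro c f
    refine tendsto_nhds_unique (hP (c • f)) ?_
    have heq : (fun n => Sel H p (c • f) n) = fun n => c • Sel H p f n :=
      funext fun n => Sel_smul H p c f n
    rw [heq]
    exact (hP f).const_smul c
  have hnorm : ∀ f, ‖Pfun f‖ ≤ ‖f‖ := fun f =>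
    le_of_tendsto (hP f).norm
      (Filter.Eventually.of_forall fun n => norm_Sel_le H p hptop f n)
  set Plin : Lp ℝ p mu01 →ₗ[ℝ] Lp ℝ p mu01 :=
    { toFun := Pfun, map_add' := hadd, map_smul' := fun c f => hsmul c f } with hPlin
  set P : Lp ℝ p mu01 →L[ℝ] Lp ℝ p mu01 :=
    Plin.mkContinuous 1 (fun f => by rw [one_mul]; exact hnorm f) with hPdef
  have hPapp : ∀ f, P f = Pfun f := fun f => rfl
  have hfix_gen : ∀ j, 1 ≤ j → Pfun (toLp01 p (H.h j)) = toLp01 p (H.h j) := by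
    intro j hj
    refine tendsto_nhds_unique (hP _) ?_
    refine Filter.Tendsto.congr' ?_ (tendsto_const_nhds (x := toLp01 p (H.h j)))
    filter_upwards [Filter.eventually_atTop.mpr
      ⟨j, fun n hn => Sel_fix H p j hj n hn⟩] with n hn
    exact hn.symm
  have hfix_span : ∀ y ∈ Submodule.span ℝ
      {x : Lp ℝ p mu01 | ∃ j : ℕ, 1 ≤ j ∧ x = toLp01 p (H.h j)}, Pfun y = y := by
    intro y hy
    induction hy using Submodule.span_induction with
    | mem y hy => obtain ⟨j, hj, rfl⟩ := hy; exact hfix_gen j hj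
    | zero => simpa using hsmul 0 0
    | add y z hy hz ihy ihz => rw [hadd, ihy, ihz]
    | smul c y hy ih => rw [hsmul, ih]
  have hclosed : IsClosed {y : Lp ℝ p mu01 | Pfun y = y} := by
    have heq : {y : Lp ℝ p mu01 | Pfun y = y} = {y | P y = y} := rfl
    rw [heq]
    exact isClosed_eq P.continuous continuous_id
  have hfix_closure : ∀ x ∈ closure ((Submodule.span ℝ
      {x : Lp ℝ p mu01 | ∃ j : ℕ, 1 ≤ j ∧ x = toLp01 p (H.h j)} : Submodule ℝ _) :
        Set (Lp ℝ p mu01)), Pfun x = x :=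
    fun x hx => closure_minimal hfix_span hclosed hx
  refine ⟨P, ?_, ?_, fun x hx => hfix_closure x hx, fun f => hP f⟩
  · -- ‖P‖ = 1
    apply le_antisymm
    · exact P.opNorm_le_bound zero_le_one (fun f => by rw [hPapp]; simpa using hnorm f)
    · have hle := P.le_opNorm (toLp01 p (H.h 1))
      rw [hPapp, hfix_gen 1 le_rfl, norm_toLp_h_one H p hptop, mul_one] at hle
      exact hle
  · -- range
    apply Set.Subset.antisymm
    · rintro x ⟨f, rfl⟩
      rw [hPapp]
      refine mem_closure_of_tendsto (hP f) (Filter.Eventually.of_forall fun n => ?_)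
      refine Submodule.sum_mem _ fun j hj => Submodule.smul_mem _ _
        (Submodule.subset_span ⟨j, (Finset.mem_Icc.mp hj).1, rfl⟩)
    · intro x hx
      exact ⟨x, (hPapp x).trans (hfix_closure x hx)⟩
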